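/- arXiv:1612.06674 — 8 statements merged into one kernel-verified Lean document; each statement's English description precedes it below -/
import Mathlib

section
/- In a pre-triangulated category, consider an exact triangle X --⟨f,0⟩--> Y ⊕ Y' --(g,g')--> Z --h--> X[1] in which the second component of the first map is zero. Then this triangle is isomorphic to the direct sum of an exact triangle X --f--> Y --α--> C --β--> X[1] (where C is a cone of f) and the trivial exact triangle 0 → Y' --1--> Y' → 0. Moreover if also g = 0, then α = 0. -/
/-!
STATEMENT 1: In a pre-triangulated category, an exact triangle
`X --⟨f,0⟩--> Y ⊞ Y' --(g,g')--> Z --h--> X⟦1⟧` is isomorphic to the direct sum of an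
exact triangle `X --f--> Y --α--> C --β--> X⟦1⟧` (with `C` a cone of `f`) and the trivial
exact triangle `0 ⟶ Y' --1--> Y' ⟶ 0`.  The isomorphism is the identity on the first two
terms and an isomorphism `e : Z ≅ C ⊞ Y'` on the third term, identifying `(g,g')` with
`α ⊕ 𝟙` and `h` with `(β, 0)`.  Moreover if also `g = 0` then `α = 0`.
-/

open CategoryTheory Category Limits Pretriangulated ZeroObject

theorem triangle_with_zero_component_splits
    {C : Type*} [Category C] [Preadditive C] [HasZeroObject C] [HasShift C ℤ]
    [∀ n : ℤ, (shiftFunctor C n).Additive] [Pretriangulated C] [HasBinaryBiproducts C]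
    {X Y Y' Z : C} (f : X ⟶ Y) (g : Y ⟶ Z) (g' : Y' ⟶ Z) (h : Z ⟶ X⟦(1 : ℤ)⟧)
    (hT : Triangle.mk (biprod.lift f (0 : X ⟶ Y')) (biprod.desc g g') h ∈ distTriang C) :
    ∃ (Cf : C) (α : Y ⟶ Cf) (β : Cf ⟶ X⟦(1 : ℤ)⟧) (e : Z ≅ Cf ⊞ Y'),
      (Triangle.mk f α β ∈ distTriang C) ∧
      biprod.desc g g' ≫ e.hom = biprod.map α (𝟙 Y') ∧
      h = e.hom ≫ biprod.desc β 0 ∧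
      (g = 0 → α = 0) := by
  obtain ⟨Cf, α, β, hTf⟩ := distinguished_cocone_triangle f
  -- the family of two triangles
  let Tfam : WalkingPair → Triangle C := fun j =>
    WalkingPair.casesOn j (⟨X, Y, Cf, f, α, β⟩ : Triangle C)
      (⟨0, Y', Y', (0 : (0 : C) ⟶ Y'), 𝟙 Y', 0⟩ : Triangle C)
  have hTfam : ∀ j, Tfam j ∈ distTriang C := by
    rintro (_ | _)
    · exact hTf
    · exact contractible_distinguished₁ Y'
  have hprod : productTriangle Tfam ∈ distTriang C :=
    productTriangle_distinguished Tfam hTfam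
  -- the biproduct triangle
  let T' : Triangle C := ⟨X, Y ⊞ Y', Cf ⊞ Y', biprod.lift f (0 : X ⟶ Y'),
    biprod.map α (𝟙 Y'), biprod.desc β 0⟩
  let e₁ : (∏ᶜ fun j => (Tfam j).obj₁) ≅ X :=
    { hom := Pi.π _ WalkingPair.left
      inv := Pi.lift (fun j => WalkingPair.casesOn j (𝟙 X) 0)
      hom_inv_id := by
        apply Pi.hom_ext; rintro (_ | _)
        · simp [Tfam]
        · exact (isZero_zero C).eq_of_tgt _ _
      inv_hom_id := by simp }
  let e₂ : (∏ᶜ fun j => (Tfam j).obj₂) ≅ (Y ⊞ Y' : C) :=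
    { hom := biprod.lift (Pi.π _ WalkingPair.left) (Pi.π _ WalkingPair.right)
      inv := Pi.lift (fun j => WalkingPair.casesOn j
        (biprod.fst : (Y ⊞ Y' : C) ⟶ Y) (biprod.snd : (Y ⊞ Y' : C) ⟶ Y'))
      hom_inv_id := by apply Pi.hom_ext; rintro (_ | _) <;> simp [Tfam]
      inv_hom_id := by ext <;> simp [Tfam] }
  let e₃ : (∏ᶜ fun j => (Tfam j).obj₃) ≅ (Cf ⊞ Y' : C) :=
    { hom := biprod.lift (Pi.π _ WalkingPair.left) (Pi.π _ WalkingPair.right)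
      inv := Pi.lift (fun j => WalkingPair.casesOn j
        (biprod.fst : (Cf ⊞ Y' : C) ⟶ Cf) (biprod.snd : (Cf ⊞ Y' : C) ⟶ Y'))
      hom_inv_id := by apply Pi.hom_ext; rintro (_ | _) <;> simp [Tfam]
      inv_hom_id := by ext <;> simp [Tfam] }
  have eiso : productTriangle Tfam ≅ T' := by
    refine Triangle.isoMk _ _ e₁ e₂ e₃ ?_ ?_ ?_
    · show (Limits.Pi.map fun j => (Tfam j).mor₁) ≫ e₂.hom = e₁.hom ≫ biprod.lift f (0 : X ⟶ Y')
      dsimp [T', e₁, e₂]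
      ext
      · simp [Tfam]
      · simp only [assoc, biprod.lift_snd, comp_zero]
        have : (Limits.Pi.map fun j => (Tfam j).mor₁) ≫
            Pi.π (fun j => (Tfam j).obj₂) WalkingPair.right
            = Pi.π (fun j => (Tfam j).obj₁) WalkingPair.right ≫
              (Tfam WalkingPair.right).mor₁ := by simp
        rw [this]
        dsimp [Tfam]
        simp
    · show (Limits.Pi.map fun j => (Tfam j).mor₂) ≫ e₃.hom = e₂.hom ≫ biprod.map α (𝟙 Y')
      dsimp [T', e₂, e₃]
      ext <;> simp [Tfam]
    · show ((Limits.Pi.map fun j => (Tfam j).mor₃) ≫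
          inv (piComparison (shiftFunctor C (1 : ℤ)) (fun j => (Tfam j).obj₁))) ≫
          (shiftFunctor C (1 : ℤ)).map e₁.hom = e₃.hom ≫ biprod.desc β 0
      dsimp [T', e₁, e₃]
      rw [biprod.lift_desc, comp_zero, add_zero, assoc,
        ← piComparison_comp_π (shiftFunctor C (1 : ℤ)) (fun j => (Tfam j).obj₁)
          WalkingPair.left, IsIso.inv_hom_id_assoc]
      simp [Tfam]
  have hT' : T' ∈ distTriang C := isomorphic_distinguished _ hprod _ eiso.symm
  have comm : (Triangle.mk (biprod.lift f (0 : X ⟶ Y')) (biprod.desc g g') h).mor₁ ≫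
      (Iso.refl (Y ⊞ Y' : C)).hom = (Iso.refl X).hom ≫ T'.mor₁ := by simp [T']; exact comp_id _
  let TT := isoTriangleOfIso₁₂ _ _ hT hT' (Iso.refl X) (Iso.refl (Y ⊞ Y' : C)) comm
  have h2 : biprod.desc g g' ≫ TT.hom.hom₃ = biprod.map α (𝟙 Y') := by
    have := TT.hom.comm₂
    exact this.trans (by rw [show TT.hom.hom₂ = 𝟙 _ from isoTriangleOfIso₁₂_hom_hom₂ _ _ _ _ _ _ _]; exact id_comp _)
  have h3 : h = TT.hom.hom₃ ≫ biprod.desc β 0 := by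
    have := TT.hom.comm₃
    have h1 : TT.hom.hom₁ = 𝟙 X := isoTriangleOfIso₁₂_hom_hom₁ _ _ _ _ _ _ _
    rw [h1] at this
    exact (comp_id h).symm.trans ((congrArg (fun k => h ≫ k)
      ((shiftFunctor C (1 : ℤ)).map_id X)).symm.trans this)
  refine ⟨Cf, α, β, Triangle.π₃.mapIso TT, hTf, h2, h3, ?_⟩
  · intro hg
    subst hg
    have e1 := biprod.inl ≫= h2
    replace e1 : 0 = α ≫ (biprod.inl : Cf ⟶ Cf ⊞ Y') := by
      rw [← biprod.inl_map α (𝟙 Y'), ← e1]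
      exact ((assoc _ _ _).symm.trans ((congrArg (· ≫ TT.hom.hom₃)
        (biprod.inl_desc (0 : Y ⟶ Z) g')).trans zero_comp)).symm
    have e2 := e1.symm =≫ (biprod.fst : (Cf ⊞ Y' : C) ⟶ Cf)
    simpa using e2
end

section
/- Let T be a triangulated category with a t-structure (T^{≥0}, T^{≤0}). The t-structure is split (meaning that for every object X the connecting map δ_X in the truncation triangle X → X^+ → X^- → X[1] can be chosen to be zero) if and only if Hom(T^{>0}, T^{<0}) = 0. -/
/-!
If `M → B → A → M⟦1⟧` is distinguished with `B ∈ T^{>0}` and `A ∈ T^{<0}`, then precomposition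
with `M → B` identifies `Hom(B, Z)` with `Hom(M, Z)` for every `Z ∈ T^{>0}`; hence any two such
triangles on `M` have isomorphic `B`'s compatibly with the maps from `M`, and the middle morphism
of one vanishes as soon as the middle morphism of the other does.

Given `f : X ⟶ Y` with `X ∈ T^{>0}` and `Y ∈ T^{<0}`, the inverse rotation of a cone triangle of
`f` is such a triangle on the fibre of `f`, with middle morphism `f`; comparing it with a split
one gives `f = 0`. Conversely, if `Hom(T^{>0}, T^{<0}) = 0`, the connecting morphism of any
truncation triangle vanishes.
-/

open CategoryTheory Category Limits Pretriangulated Triangulated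

namespace CategoryTheory.Triangulated.TStructure

variable {C : Type*} [Category C] [Preadditive C] [HasZeroObject C] [HasShift C ℤ]
  [∀ n : ℤ, (shiftFunctor C n).Additive] [Pretriangulated C] (t : TStructure C)
  {M B A Z : C} {u : M ⟶ B} {v : B ⟶ A} {w : A ⟶ M⟦(1 : ℤ)⟧}

lemma exists_eq_comp_of_distTriang (hT : Triangle.mk u v w ∈ distTriang C) (hA : t.le (-1) A)
    (g : M ⟶ Z) (hZ : t.ge 1 Z) : ∃ g' : B ⟶ Z, g = u ≫ g' :=
  Triangle.yoneda_exact₂ _ (inv_rot_of_distTriang _ hT) g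
    (t.zero' _ (t.le_shift (-1) (-1) 0 (by lia) A hA) hZ)

lemma hom_ext_of_distTriang (hT : Triangle.mk u v w ∈ distTriang C) (hA : t.le (-1) A)
    (hZ : t.ge 1 Z) {h h' : B ⟶ Z} (hhh' : u ≫ h = u ≫ h') : h = h' := by
  obtain ⟨k, hk⟩ : ∃ k : A ⟶ Z, h - h' = v ≫ k := Triangle.yoneda_exact₂ _ hT (h - h')
    (show u ≫ (h - h') = 0 by rw [Preadditive.comp_sub, hhh', sub_self])
  have hk₀ : k = 0 := t.zero_of_isLE_of_isGE k (-1) 1 (by lia) ⟨hA⟩ ⟨hZ⟩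
  rw [hk₀, comp_zero, sub_eq_zero] at hk
  exact hk

lemma mor₂_eq_zero_of_mor₂_eq_zero {B' A' : C} {u' : M ⟶ B'} {v' : B' ⟶ A'}
    {w' : A' ⟶ M⟦(1 : ℤ)⟧} (hT : Triangle.mk u v w ∈ distTriang C)
    (hT' : Triangle.mk u' v' w' ∈ distTriang C) (hB : t.ge 1 B) (hA : t.le (-1) A)
    (hB' : t.ge 1 B') (hA' : t.le (-1) A') (hv : v = 0) : v' = 0 := by
  obtain ⟨g, hg⟩ := t.exists_eq_comp_of_distTriang hT hA u' hB'
  obtain ⟨d, hd⟩ := t.exists_eq_comp_of_distTriang hT' hA' u hB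
  have hdg : d ≫ g = 𝟙 B' :=
    t.hom_ext_of_distTriang hT' hA' hB' (by rw [← assoc, ← hd, ← hg, comp_id])
  have hgv' : g ≫ v' = 0 := by
    obtain ⟨k, hk⟩ : ∃ k : A ⟶ A', g ≫ v' = v ≫ k := Triangle.yoneda_exact₂ _ hT (g ≫ v')
      (show u ≫ g ≫ v' = 0 by rw [← assoc, ← hg]; exact comp_distTriang_mor_zero₁₂ _ hT')
    rw [hk, hv, zero_comp]
  rw [← id_comp v', ← hdg, assoc, hgv', comp_zero]

end CategoryTheory.Triangulated.TStructure

theorem tStructure_split_iff_hom_vanishes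
    {C : Type*} [Category C] [Preadditive C] [HasZeroObject C] [HasShift C ℤ]
    [∀ n : ℤ, (shiftFunctor C n).Additive] [Pretriangulated C]
    (t : TStructure C) :
    (∀ X : C, ∃ (P Q : C) (_ : t.ge 1 P) (_ : t.le (-1) Q)
        (f : X ⟶ P) (h : Q ⟶ X⟦(1 : ℤ)⟧),
        Triangle.mk f (0 : P ⟶ Q) h ∈ distTriang C) ↔
      (∀ (X Y : C), t.ge 1 X → t.le (-1) Y → ∀ f : X ⟶ Y, f = 0) := by
  refine ⟨fun hsplit X Y hX hY f => ?_, fun hvanish X => ?_⟩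
  · obtain ⟨W, g, h, hT⟩ := distinguished_cocone_triangle f
    obtain ⟨P, Q, hP, hQ, u, w, hPQ⟩ := hsplit (Triangle.mk f g h).invRotate.obj₁
    exact t.mor₂_eq_zero_of_mor₂_eq_zero hPQ (inv_rot_of_distTriang _ hT) hP hQ hX hY rfl
  · obtain ⟨A, B, hA, hB, i, p, δ, hT⟩ := t.exists_triangle_zero_one X
    have hA' : t.le (-1) (A⟦(1 : ℤ)⟧) := t.le_shift 0 1 (-1) (by lia) A hA
    obtain rfl : δ = 0 := hvanish B _ hB hA' δ
    exact ⟨B, A⟦(1 : ℤ)⟧, hB, hA', p, -i⟦(1 : ℤ)⟧', rot_of_distTriang _ hT⟩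
end

section
/- Let T be a triangulated category with a split t-structure (T^{≥0}, T^{≤0}) with heart H = T^{≥0} ∩ T^{≤0}. Then Hom_T(H, H[n]) = 0 for all n ≠ 0, 1; that is, the heart is an admissible hereditary subcategory of T. -/
/-!
Truncation triangles `τ≤0 X → X → τ≥1 X → (τ≤0 X)⟦1⟧` are unique up to isomorphism, so for a
split t-structure every such triangle has zero connecting morphism. Any `g : A ⟶ B` with
`A ≥ 1` and `B ≤ -1` is the connecting morphism of the truncation triangle
`B⟦-1⟧ → W → A → B` of its cocone `W`, hence vanishes; by shifting, `Hom(T^{≥a}, T^{≤b}) = 0`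
whenever `b + 2 ≤ a`. For `X, Y` in the heart this kills `Hom(X, Y⟦n⟧)` for `n ≥ 2`, while for
`n < 0` it vanishes by the t-structure axioms.
-/

open CategoryTheory Category Limits Pretriangulated Triangulated

namespace CategoryTheory.Triangulated.TStructure

variable {C : Type*} [Category C] [Preadditive C] [HasZeroObject C] [HasShift C ℤ]
  [∀ n : ℤ, (shiftFunctor C n).Additive] [Pretriangulated C]

def IsSplit (t : TStructure C) : Prop :=
  ∀ X : C, ∃ (P Q : C) (_ : t.ge 1 P) (_ : t.le (-1) Q) (f : X ⟶ P) (h : Q ⟶ X⟦(1 : ℤ)⟧),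
    Triangle.mk f (0 : P ⟶ Q) h ∈ distTriang C

variable {t : TStructure C}

lemma IsSplit.mor₃_eq_zero (ht : t.IsSplit) (T : Triangle C) (hT : T ∈ distTriang C)
    (hT₁ : t.IsLE T.obj₁ 0) (hT₃ : t.IsGE T.obj₃ 1) : T.mor₃ = 0 := by
  obtain ⟨P, Q, hP, hQ, f, h, hS⟩ := ht T.obj₂
  have hQ' : t.IsLE (Q⟦(-1 : ℤ)⟧) 0 := ⟨t.le_shift _ _ _ (by lia) Q hQ⟩
  obtain ⟨e, -⟩ := t.triangle_iso_exists (inv_rot_of_distTriang _ hS) hT (Iso.refl _) 0 1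
    hQ' ⟨hP⟩ hT₁ hT₃
  have hS₃ : (Triangle.mk f 0 h).invRotate.mor₃ = 0 := zero_comp
  rw [← cancel_epi e.hom.hom₃, ← e.hom.comm₃, hS₃, zero_comp, comp_zero]

lemma IsSplit.zero_of_isGE_one_of_isLE_neg_one (ht : t.IsSplit) {A B : C} (g : A ⟶ B)
    (hA : t.IsGE A 1) (hB : t.IsLE B (-1)) : g = 0 := by
  let ε := (shiftFunctorCompIsoId C (-1 : ℤ) 1 (by lia)).app B
  obtain ⟨W, u, v, hT⟩ := distinguished_cocone_triangle₂ (g ≫ ε.inv)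
  rw [← cancel_mono ε.inv, zero_comp]
  exact ht.mor₃_eq_zero _ hT (t.isLE_shift B (-1) (-1) 0) hA

lemma IsSplit.zero (ht : t.IsSplit) {A B : C} (g : A ⟶ B) (a b : ℤ) (hab : b + 2 ≤ a)
    [t.IsGE A a] [t.IsLE B b] : g = 0 := by
  have : t.IsLE (B⟦a - 1⟧) (b - a + 1) := t.isLE_shift B b (a - 1) (b - a + 1)
  apply (shiftFunctor C (a - 1)).map_injective
  rw [Functor.map_zero]
  exact ht.zero_of_isGE_one_of_isLE_neg_one _ (t.isGE_shift A a (a - 1) 1)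
    (t.isLE_of_le _ (b - a + 1) (-1))

end CategoryTheory.Triangulated.TStructure

theorem heart_of_split_tStructure_is_hereditary
    {C : Type*} [Category C] [Preadditive C] [HasZeroObject C] [HasShift C ℤ]
    [∀ n : ℤ, (shiftFunctor C n).Additive] [Pretriangulated C]
    (t : TStructure C)
    (hsplit : ∀ X : C, ∃ (P Q : C) (_ : t.ge 1 P) (_ : t.le (-1) Q)
        (f : X ⟶ P) (h : Q ⟶ X⟦(1 : ℤ)⟧),
        Triangle.mk f (0 : P ⟶ Q) h ∈ distTriang C) :
    ∀ (X Y : C), (t.le 0 X ∧ t.ge 0 X) → (t.le 0 Y ∧ t.ge 0 Y) →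
      ∀ n : ℤ, n ≠ 0 → n ≠ 1 → ∀ f : X ⟶ Y⟦n⟧, f = 0 := by
  rintro X Y ⟨hX₀, hX₁⟩ ⟨hY₀, hY₁⟩ n hn₀ hn₁ f
  have : t.IsLE X 0 := ⟨hX₀⟩
  have : t.IsGE X 0 := ⟨hX₁⟩
  have : t.IsLE Y 0 := ⟨hY₀⟩
  have : t.IsGE Y 0 := ⟨hY₁⟩
  rcases lt_or_gt_of_ne hn₀ with hneg | hpos
  · have : t.IsGE (Y⟦n⟧) (-n) := t.isGE_shift Y 0 n (-n)
    exact t.zero f 0 (-n)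
  · have : t.IsLE (Y⟦n⟧) (-n) := t.isLE_shift Y 0 n (-n)
    exact TStructure.IsSplit.zero hsplit f 0 (-n) (by lia)
end

section
/- Let T be a triangulated category and C ⊆ T a full additive subcategory closed under extensions with Hom(C, C[-n]) = 0 for all n > 0. Suppose for every morphism f : X → Y in C there exist exact triangles S --x--> X --f--> Y --y--> S[1] and S --c[-1]--> C'[-1] --θ--> K[1] --k[1]--> S[1] in T with K, C' ∈ C, such that x ∘ k : K → X is a kernel of f in C and c ∘ y : Y → C' is a cokernel of f in C. Then C, with the exact structure inherited from T, is an abelian category. -/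
/-!
Kernels and cokernels exist by hypothesis, finite biproducts and a zero object are inherited
from `T`, so it remains to see that monomorphisms are kernels and epimorphisms cokernels. If
`f : X ⟶ Y` is a monomorphism of the subcategory, its kernel `K` vanishes, so the second triangle
makes `c : S⟦1⟧ ⟶ Q` an isomorphism and `S ≅ Q⟦-1⟧`. Then `Hom(W, S) = 0` for every `W` in the
subcategory by the vanishing hypothesis, and the long exact `Hom(W, -)` sequence of the triangle
`S ⟶ X ⟶ Y ⟶ S⟦1⟧` shows that `f` is a kernel of `y ≫ c`. Dually, an epimorphism has `Q = 0`,
`k` is an isomorphism, `Hom(S⟦1⟧, W) ≅ Hom(K, W⟦-1⟧) = 0`, and `f` is a cokernel of `k ≫ x`.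
-/

open CategoryTheory Category Limits Pretriangulated

namespace CategoryTheory

namespace ObjectProperty

variable {C : Type*} [Category C] {P : ObjectProperty C}

lemma hasBinaryBiproducts_fullSubcategory [Preadditive C] [HasBinaryBiproducts C]
    (hP : ∀ {X Y : C}, P X → P Y → P (X ⊞ Y)) : HasBinaryBiproducts P.FullSubcategory where
  has_binary_biproduct X Y := hasBinaryBiproduct_of_total
    { pt := ⟨X.obj ⊞ Y.obj, hP X.property Y.property⟩
      fst := homMk biprod.fst
      snd := homMk biprod.snd
      inl := homMk biprod.inl
      inr := homMk biprod.inr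
      inl_fst := hom_ext _ biprod.inl_fst
      inl_snd := hom_ext _ biprod.inl_snd
      inr_fst := hom_ext _ biprod.inr_fst
      inr_snd := hom_ext _ biprod.inr_snd }
    (hom_ext _ biprod.total)

variable [HasZeroMorphisms C]

noncomputable def isLimitKernelForkOfExistsUnique {K X Y : P.FullSubcategory}
    {ι : K ⟶ X} {f : X ⟶ Y} (w : ι ≫ f = 0)
    (h : ∀ Z : C, P Z → ∀ g : Z ⟶ X.obj, g ≫ f.hom = 0 → ∃! u : Z ⟶ K.obj, u ≫ ι.hom = g) :
    IsLimit (KernelFork.ofι ι w) := by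
  choose lift hlift hunique using fun (Z : P.FullSubcategory) (g : Z ⟶ X) (hg : g ≫ f = 0) =>
    h Z.obj Z.property g.hom congr(($hg).hom)
  exact KernelFork.IsLimit.ofι ι w (fun g hg => homMk (lift _ g hg))
    (fun g hg => hom_ext _ (hlift _ g hg))
    (fun g hg m hm => hom_ext _ (hunique _ g hg m.hom congr(($hm).hom)))

noncomputable def isColimitCokernelCoforkOfExistsUnique {X Y Q : P.FullSubcategory}
    {f : X ⟶ Y} {π : Y ⟶ Q} (w : f ≫ π = 0)
    (h : ∀ Z : C, P Z → ∀ g : Y.obj ⟶ Z, f.hom ≫ g = 0 → ∃! u : Q.obj ⟶ Z, π.hom ≫ u = g) :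
    IsColimit (CokernelCofork.ofπ π w) := by
  choose desc hdesc hunique using fun (Z : P.FullSubcategory) (g : Y ⟶ Z) (hg : f ≫ g = 0) =>
    h Z.obj Z.property g.hom congr(($hg).hom)
  exact CokernelCofork.IsColimit.ofπ π w (fun g hg => homMk (desc _ g hg))
    (fun g hg => hom_ext _ (hdesc _ g hg))
    (fun g hg m hm => hom_ext _ (hunique _ g hg m.hom congr(($hm).hom)))

end ObjectProperty

namespace Pretriangulated

variable {C : Type*} [Category C] [Preadditive C] [HasZeroObject C] [HasShift C ℤ]
  [∀ n : ℤ, (shiftFunctor C n).Additive] [Pretriangulated C]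

noncomputable def kernelCokernelTriangle {S K Q : C} (c : S⟦(1 : ℤ)⟧ ⟶ Q)
    (θ : Q⟦(-1 : ℤ)⟧ ⟶ K⟦(1 : ℤ)⟧) (k : K ⟶ S) : Triangle C :=
  Triangle.mk ((shiftFunctorCompIsoId C (1 : ℤ) (-1 : ℤ) (add_neg_cancel 1)).inv.app S ≫
    (shiftFunctor C (-1 : ℤ)).map c) θ ((shiftFunctor C (1 : ℤ)).map k)

lemma eq_zero_of_shift_neg_one {X Y : C} (h : ∀ g : X ⟶ Y⟦(-1 : ℤ)⟧, g = 0)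
    (w : X⟦(1 : ℤ)⟧ ⟶ Y) : w = 0 := by
  let adj := (shiftEquiv C (1 : ℤ)).toAdjunction
  have h0 : adj.homEquiv X Y w = 0 := h _
  rw [← (adj.homEquiv X Y).symm_apply_apply w, h0, adj.homEquiv_counit, Functor.map_zero]
  exact zero_comp

variable {S X Y K Q W : C} {x : S ⟶ X} {f : X ⟶ Y} {y : Y ⟶ S⟦(1 : ℤ)⟧} {k : K ⟶ S}
  {c : S⟦(1 : ℤ)⟧ ⟶ Q} {θ : Q⟦(-1 : ℤ)⟧ ⟶ K⟦(1 : ℤ)⟧}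

lemma existsUnique_lift_of_distTriang (hT : Triangle.mk x f y ∈ distTriang C)
    (hW : ∀ v : W ⟶ S, v = 0) (g : W ⟶ Y) (hg : g ≫ y = 0) : ∃! u : W ⟶ X, u ≫ f = g := by
  obtain ⟨u, rfl⟩ : ∃ u : W ⟶ X, g = u ≫ f := Triangle.coyoneda_exact₃ _ hT g hg
  refine ⟨u, rfl, fun u' hu' => ?_⟩
  have hd : (u' - u) ≫ f = 0 := by rw [Preadditive.sub_comp, hu', sub_self]
  obtain ⟨v, hv⟩ := Triangle.coyoneda_exact₂ _ hT (u' - u) hd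
  rw [← sub_eq_zero, hv, hW v]
  exact zero_comp

lemma existsUnique_desc_of_distTriang (hT : Triangle.mk x f y ∈ distTriang C)
    (hW : ∀ w : S⟦(1 : ℤ)⟧ ⟶ W, w = 0) (g : X ⟶ W) (hg : x ≫ g = 0) :
    ∃! u : Y ⟶ W, f ≫ u = g := by
  obtain ⟨u, rfl⟩ : ∃ u : Y ⟶ W, g = f ≫ u := Triangle.yoneda_exact₂ _ hT g hg
  refine ⟨u, rfl, fun u' hu' => ?_⟩
  have hd : f ≫ (u' - u) = 0 := by rw [Preadditive.comp_sub, hu', sub_self]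
  obtain ⟨w, hw⟩ := Triangle.yoneda_exact₃ _ hT (u' - u) hd
  rw [← sub_eq_zero, hw, hW w]
  exact comp_zero

lemma isIso_of_distTriang_of_isZero₃ (hT : kernelCokernelTriangle c θ k ∈ distTriang C)
    (hK : IsZero K) : IsIso c := by
  have : IsIso ((shiftFunctorCompIsoId C (1 : ℤ) (-1 : ℤ) (add_neg_cancel 1)).inv.app S ≫
      (shiftFunctor C (-1 : ℤ)).map c) :=
    (Triangle.isZero₃_iff_isIso₁ _ hT).1 ((shiftFunctor C (1 : ℤ)).map_isZero hK)
  have : IsIso ((shiftFunctor C (-1 : ℤ)).map c) := IsIso.of_isIso_comp_left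
    ((shiftFunctorCompIsoId C (1 : ℤ) (-1 : ℤ) (add_neg_cancel 1)).inv.app S) _
  exact isIso_of_reflects_iso c (shiftFunctor C (-1 : ℤ))

lemma isIso_of_distTriang_of_isZero₂ (hT : kernelCokernelTriangle c θ k ∈ distTriang C)
    (hQ : IsZero Q) : IsIso k := by
  have : IsIso ((shiftFunctor C (1 : ℤ)).map k) :=
    (Triangle.isZero₂_iff_isIso₃ _ hT).1 ((shiftFunctor C (-1 : ℤ)).map_isZero hQ)
  exact isIso_of_reflects_iso k (shiftFunctor C (1 : ℤ))

lemma existsUnique_lift_of_distTriang_of_isZero (hT₁ : Triangle.mk x f y ∈ distTriang C)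
    (hT₂ : kernelCokernelTriangle c θ k ∈ distTriang C) (hK : IsZero K)
    (hW : ∀ g : W ⟶ Q⟦(-1 : ℤ)⟧, g = 0) (g : W ⟶ Y) (hg : g ≫ y ≫ c = 0) :
    ∃! u : W ⟶ X, u ≫ f = g := by
  have := isIso_of_distTriang_of_isZero₃ hT₂ hK
  refine existsUnique_lift_of_distTriang hT₁ (fun v => ?_) g ?_
  · rw [← cancel_mono ((shiftFunctorCompIsoId C (1 : ℤ) (-1 : ℤ) (add_neg_cancel 1)).inv.app S ≫
      (shiftFunctor C (-1 : ℤ)).map c), hW (v ≫ _), zero_comp]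
  · rw [← cancel_mono c, assoc, hg, zero_comp]

lemma existsUnique_desc_of_distTriang_of_isZero (hT₁ : Triangle.mk x f y ∈ distTriang C)
    (hT₂ : kernelCokernelTriangle c θ k ∈ distTriang C) (hQ : IsZero Q)
    (hW : ∀ g : K ⟶ W⟦(-1 : ℤ)⟧, g = 0) (g : X ⟶ W) (hg : (k ≫ x) ≫ g = 0) :
    ∃! u : Y ⟶ W, f ≫ u = g := by
  have := isIso_of_distTriang_of_isZero₂ hT₂ hQ
  refine existsUnique_desc_of_distTriang hT₁ (fun w => ?_) g ?_
  · rw [← cancel_epi ((shiftFunctor C (1 : ℤ)).map k), eq_zero_of_shift_neg_one hW (_ ≫ w),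
      comp_zero]
  · rw [← cancel_epi k, ← assoc, hg, comp_zero]

end Pretriangulated

end CategoryTheory

theorem admissible_subcategory_abelian_of_kernels_cokernels
    {C : Type*} [Category C] [Preadditive C] [HasZeroObject C] [HasShift C ℤ]
    [∀ n : ℤ, (shiftFunctor C n).Additive] [Pretriangulated C] [HasBinaryBiproducts C]
    (P : C → Prop)
    (hiso : ∀ {X Y : C}, (X ≅ Y) → P X → P Y)
    (hzero : ∀ X : C, IsZero X → P X)
    (hadd : ∀ {X Y : C}, P X → P Y → P (X ⊞ Y))
    (hext : ∀ T ∈ distTriang C, P T.obj₁ → P T.obj₃ → P T.obj₂)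
    (hvanish : ∀ (X Y : C), P X → P Y → ∀ n : ℤ, n < 0 → ∀ f : X ⟶ Y⟦n⟧, f = 0)
    (hkercoker : ∀ (X Y : C), P X → P Y → ∀ f : X ⟶ Y,
      ∃ (S K Q : C) (_ : P K) (_ : P Q)
        (x : S ⟶ X) (y : Y ⟶ S⟦(1 : ℤ)⟧) (k : K ⟶ S)
        (c : S⟦(1 : ℤ)⟧ ⟶ Q) (θ : Q⟦(-1 : ℤ)⟧ ⟶ K⟦(1 : ℤ)⟧),
        (Triangle.mk x f y ∈ distTriang C) ∧
        (Triangle.mk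
            ((shiftFunctorCompIsoId C (1 : ℤ) (-1 : ℤ) (by omega)).inv.app S ≫
              (shiftFunctor C (-1 : ℤ)).map c)
            θ ((shiftFunctor C (1 : ℤ)).map k) ∈ distTriang C) ∧
        -- `k ≫ x` is a kernel of `f` in the subcategory
        ((k ≫ x) ≫ f = 0 ∧
          ∀ (Z : C), P Z → ∀ g : Z ⟶ X, g ≫ f = 0 → ∃! u : Z ⟶ K, u ≫ (k ≫ x) = g) ∧
        -- `y ≫ c` is a cokernel of `f` in the subcategory
        (f ≫ (y ≫ c) = 0 ∧
          ∀ (Z : C), P Z → ∀ g : Y ⟶ Z, f ≫ g = 0 → ∃! u : Q ⟶ Z, (y ≫ c) ≫ u = g)) :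
    Nonempty (Abelian (ObjectProperty.FullSubcategory P)) := by
  have : ObjectProperty.ContainsZero P := ⟨⟨_, isZero_zero C, hzero _ (isZero_zero C)⟩⟩
  have := ObjectProperty.hasBinaryBiproducts_fullSubcategory (P := P) hadd
  have key : ∀ {X Y : ObjectProperty.FullSubcategory P} (f : X ⟶ Y),
      HasKernel f ∧ HasCokernel f ∧ (Mono f → Nonempty (NormalMono f)) ∧
        (Epi f → Nonempty (NormalEpi f)) := by
    intro X Y f
    obtain ⟨S, K, Q, hK, hQ, x, y, k, c, θ, hT₁, hT₂, ⟨hk₀, hk⟩, ⟨hc₀, hc⟩⟩ :=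
      hkercoker X.obj Y.obj X.property Y.property f.hom
    let ι : (⟨K, hK⟩ : ObjectProperty.FullSubcategory P) ⟶ X := ObjectProperty.homMk (k ≫ x)
    let π : Y ⟶ (⟨Q, hQ⟩ : ObjectProperty.FullSubcategory P) := ObjectProperty.homMk (y ≫ c)
    have hι : ι ≫ f = 0 := ObjectProperty.hom_ext _ hk₀
    have hπ : f ≫ π = 0 := ObjectProperty.hom_ext _ hc₀
    have hker := ObjectProperty.isLimitKernelForkOfExistsUnique hι hk
    have hcoker := ObjectProperty.isColimitCokernelCoforkOfExistsUnique hπ hc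
    refine ⟨⟨_, hker⟩, ⟨_, hcoker⟩, fun _ => ⟨⟨_, π, hπ, ?_⟩⟩, fun _ => ⟨⟨_, ι, hι, ?_⟩⟩⟩
    · have hKz : IsZero K :=
        (ObjectProperty.ι P).map_isZero (KernelFork.IsLimit.isZero_of_mono hker)
      exact ObjectProperty.isLimitKernelForkOfExistsUnique hπ fun W hW g hg =>
        existsUnique_lift_of_distTriang_of_isZero hT₁ hT₂ hKz
          (hvanish W Q hW hQ (-1) (by omega)) g hg
    · have hQz : IsZero Q :=
        (ObjectProperty.ι P).map_isZero (CokernelCofork.IsColimit.isZero_of_epi hcoker)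
      exact ObjectProperty.isColimitCokernelCoforkOfExistsUnique hι fun W hW g hg =>
        existsUnique_desc_of_distTriang_of_isZero hT₁ hT₂ hQz
          (hvanish K W hK hW (-1) (by omega)) g hg
  have : HasKernels (ObjectProperty.FullSubcategory P) := ⟨fun f => (key f).1⟩
  have : HasCokernels (ObjectProperty.FullSubcategory P) := ⟨fun f => (key f).2.1⟩
  have := hasFiniteProducts_of_has_binary_and_terminal (C := ObjectProperty.FullSubcategory P)
  exact ⟨{ normalMonoOfMono f _ := (key f).2.2.1 ‹_›
           normalEpiOfEpi f _ := (key f).2.2.2 ‹_› }⟩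
end

section
/- (Key Lemma) Let T be a triangulated category. Suppose given an exact commutative diagram consisting of exact triangles I --a--> X --f'--> Y' --y'--> I[1] (first row), I --f''a--> Y'' --g''--> Z --b--> I[1] (second row), and a third column and second column making the octahedral diagram commute, with morphisms f'' : X → Y'', g' : Y' → Z, h : Z → X[1] satisfying a[1]∘b = h = x[1]∘z, where E[1] is the common cone with maps y'' : Y'' → E[1], z : Z → E[1], x : E → X. If the induced map Hom(Y'', Y') --g'∘(-)--> Hom(Y'', Z) vanishes, then the triangle X --⟨-f', f''⟩--> Y' ⊕ Y'' --(g', g'')--> Z --h--> X[1] is exact. -/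
/-!
STATEMENT 6 (Key Lemma): In a triangulated category, suppose given an exact commutative
diagram with exact rows `I --a--> X --f'--> Y' --y'--> I⟦1⟧`,
`I --a ≫ f''--> Y'' --g''--> Z --b--> I⟦1⟧`, exact columns
`X --f''--> Y'' --y''--> E⟦1⟧ --x⟦1⟧--> X⟦1⟧` and
`Y' --g'--> Z --z--> E⟦1⟧ --(x ≫ f')⟦1⟧--> Y'⟦1⟧`, commuting squares
`f' ≫ g' = f'' ≫ g''`, `g' ≫ b = y'`, `g'' ≫ z = y''`, and with
`h = b ≫ a⟦1⟧ = z ≫ x⟦1⟧`.  If composition with `g' : Y' ⟶ Z` kills every morphism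
`Y'' ⟶ Y'`, then `X --⟨-f',f''⟩--> Y' ⊞ Y'' --(g',g'')--> Z --h--> X⟦1⟧` is exact.
-/

open CategoryTheory Category Limits Pretriangulated

theorem key_lemma
    {C : Type*} [Category C] [Preadditive C] [HasZeroObject C] [HasShift C ℤ]
    [∀ n : ℤ, (shiftFunctor C n).Additive] [Pretriangulated C] [IsTriangulated C]
    [HasBinaryBiproducts C]
    {I X Y' Y'' Z E : C}
    (a : I ⟶ X) (f' : X ⟶ Y') (y' : Y' ⟶ I⟦(1 : ℤ)⟧)
    (f'' : X ⟶ Y'') (g'' : Y'' ⟶ Z) (b : Z ⟶ I⟦(1 : ℤ)⟧)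
    (g' : Y' ⟶ Z) (h : Z ⟶ X⟦(1 : ℤ)⟧)
    (y'' : Y'' ⟶ E⟦(1 : ℤ)⟧) (z : Z ⟶ E⟦(1 : ℤ)⟧) (x : E ⟶ X)
    (hrow₁ : Triangle.mk a f' y' ∈ distTriang C)
    (hrow₂ : Triangle.mk (a ≫ f'') g'' b ∈ distTriang C)
    (hcol₂ : Triangle.mk f'' y'' ((shiftFunctor C (1 : ℤ)).map x) ∈ distTriang C)
    (hcol₃ : Triangle.mk g' z ((shiftFunctor C (1 : ℤ)).map (x ≫ f')) ∈ distTriang C)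
    (hsq : f' ≫ g' = f'' ≫ g'')
    (hsq' : g' ≫ b = y')
    (hsq'' : g'' ≫ z = y'')
    (hh₁ : h = b ≫ (shiftFunctor C (1 : ℤ)).map a)
    (hh₂ : h = z ≫ (shiftFunctor C (1 : ℤ)).map x)
    (hvanish : ∀ φ : Y'' ⟶ Y', φ ≫ g' = 0) :
    Triangle.mk (biprod.lift (-f') f'') (biprod.desc g' g'') h ∈ distTriang C := by
  -- the cone of `u = biprod.lift (-f') f''`
  obtain ⟨W, p, w, hW⟩ := distinguished_cocone_triangle (biprod.lift (-f') f'')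
  -- the rotated split triangle `Y' ⊞ Y'' ⟶ Y'' ⟶ Y'⟦1⟧ ⟶ (Y' ⊞ Y'')⟦1⟧`
  have h₂₃ : Triangle.mk (biprod.snd : Y' ⊞ Y'' ⟶ Y'') (0 : Y'' ⟶ Y'⟦(1 : ℤ)⟧)
      (-(shiftFunctor C (1 : ℤ)).map (biprod.inl : Y' ⟶ Y' ⊞ Y'')) ∈ distTriang C :=
    rot_of_distTriang _ (binaryBiproductTriangle_distinguished Y' Y'')
  have hcomm : biprod.lift (-f') f'' ≫ (biprod.snd : Y' ⊞ Y'' ⟶ Y'') = f'' :=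
    biprod.lift_snd _ _
  -- octahedron on `u ≫ biprod.snd = f''`
  let oct := Triangulated.someOctahedron hcomm hW h₂₃ hcol₂
  -- compute `m₃` from `comm₄`
  have hm₃ : oct.m₃ = (shiftFunctor C (1 : ℤ)).map (x ≫ f') := by
    have h4 := oct.comm₄
    have h5 := congrArg
      (fun t => t ≫ (shiftFunctor C (1 : ℤ)).map (biprod.fst : Y' ⊞ Y'' ⟶ Y')) h4
    simp only [assoc, ← Functor.map_comp, biprod.lift_fst, Preadditive.neg_comp,
      Preadditive.comp_neg, biprod.inl_fst, CategoryTheory.Functor.map_id, comp_id,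
      neg_neg] at h5
    have h6 : -x ≫ f' = -(x ≫ f') := by simp
    rw [h6, Functor.map_neg] at h5
    exact (neg_inj.mp h5).symm
  -- the two rotated triangles to compare
  have hT₁ : (Triangle.mk oct.m₁ oct.m₃
      ((-(shiftFunctor C (1 : ℤ)).map (biprod.inl : Y' ⟶ Y' ⊞ Y'')) ≫
        (shiftFunctor C (1 : ℤ)).map p)).rotate ∈ distTriang C :=
    rot_of_distTriang _ oct.mem
  have hT₂ : ((Triangle.mk g' z ((shiftFunctor C (1 : ℤ)).map (x ≫ f'))).rotate).rotate
      ∈ distTriang C :=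
    rot_of_distTriang _ (rot_of_distTriang _ hcol₃)
  obtain ⟨c, hc₁, hc₂⟩ : ∃ c : (shiftFunctor C (1 : ℤ)).obj W ⟶ (shiftFunctor C (1 : ℤ)).obj Z,
      ((-(shiftFunctor C (1 : ℤ)).map (biprod.inl : Y' ⟶ Y' ⊞ Y'')) ≫
        (shiftFunctor C (1 : ℤ)).map p) ≫ c =
        𝟙 ((shiftFunctor C (1 : ℤ)).obj Y') ≫ (-(shiftFunctor C (1 : ℤ)).map g') ∧
      (-(shiftFunctor C (1 : ℤ)).map oct.m₁) ≫
        (shiftFunctor C (1 : ℤ)).map (𝟙 ((shiftFunctor C (1 : ℤ)).obj E)) =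
        c ≫ (-(shiftFunctor C (1 : ℤ)).map z) :=
    complete_distinguished_triangle_morphism _ _ hT₁ hT₂
    (𝟙 _) (𝟙 _) (by dsimp [Triangle.rotate, Triangle.mk]; rw [hm₃]; simp)
  rw [CategoryTheory.Functor.map_id, comp_id] at hc₂
  -- clean up hc₁ and hc₂
  have e₁ : (shiftFunctor C (1 : ℤ)).map (biprod.inl ≫ p) ≫ c
      = (shiftFunctor C (1 : ℤ)).map g' := by
    have := hc₁
    simp only [Preadditive.neg_comp, id_comp, neg_inj, assoc, Functor.map_comp] at this ⊢
    exact this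
  have e₂ : c ≫ (shiftFunctor C (1 : ℤ)).map z = (shiftFunctor C (1 : ℤ)).map oct.m₁ := by
    have := hc₂
    simp only [Preadditive.neg_comp, Preadditive.comp_neg, neg_inj] at this
    exact this.symm
  -- `c` is an isomorphism
  have hciso : IsIso c := by
    have := isIso₃_of_isIso₁₂
      ({ hom₁ := 𝟙 _, hom₂ := 𝟙 _, hom₃ := c,
         comm₁ := by dsimp [Triangle.rotate, Triangle.mk]; rw [hm₃]; simp
         comm₂ := hc₁
         comm₃ := by
           dsimp [Triangle.rotate, Triangle.mk]
           rw [CategoryTheory.Functor.map_id, comp_id]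
           exact hc₂ } :
        (Triangle.mk oct.m₁ oct.m₃
          ((-(shiftFunctor C (1 : ℤ)).map (biprod.inl : Y' ⟶ Y' ⊞ Y'')) ≫
            (shiftFunctor C (1 : ℤ)).map p)).rotate ⟶
        ((Triangle.mk g' z ((shiftFunctor C (1 : ℤ)).map (x ≫ f'))).rotate).rotate)
      hT₁ hT₂ (IsIso.id _) (IsIso.id _)
    exact this
  -- descend `c` to an isomorphism `γ : W ⟶ Z`
  let γ : W ⟶ Z := (shiftFunctor C (1 : ℤ)).preimage c
  have hγ : (shiftFunctor C (1 : ℤ)).map γ = c := (shiftFunctor C (1 : ℤ)).map_preimage c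
  have hγiso : IsIso γ := by
    have : IsIso ((shiftFunctor C (1 : ℤ)).map γ) := by rw [hγ]; infer_instance
    exact isIso_of_reflects_iso γ (shiftFunctor C (1 : ℤ))
  have hγz : γ ≫ z = oct.m₁ := (shiftFunctor C (1 : ℤ)).map_injective
    (by rw [Functor.map_comp, hγ, e₂])
  have hp' : (biprod.inl ≫ p) ≫ γ = g' := (shiftFunctor C (1 : ℤ)).map_injective
    (by rw [Functor.map_comp, hγ, e₁])
  have hp'' : (biprod.inr ≫ p) ≫ γ = g'' := by
    have h1 : p ≫ oct.m₁ = biprod.snd ≫ y'' := oct.comm₁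
    have hz : ((biprod.inr ≫ p) ≫ γ - g'') ≫ z = 0 := by
      rw [Preadditive.sub_comp, assoc, hγz, assoc, h1, ← assoc, biprod.inr_snd, id_comp,
        hsq'', sub_self]
    obtain ⟨φ, hφ⟩ := Triangle.coyoneda_exact₂ _ hcol₃ _ hz
    dsimp [Triangle.rotate, Triangle.mk] at hφ
    rw [hvanish φ, sub_eq_zero] at hφ
    exact hφ
  have hγh : γ ≫ h = w := by
    have h2 : oct.m₁ ≫ (shiftFunctor C (1 : ℤ)).map x = w := oct.comm₂
    rw [hh₂, ← assoc, hγz, h2]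
  have hpγ : p ≫ γ = biprod.desc g' g'' := by
    apply biprod.hom_ext'
    · rw [← assoc, hp', biprod.inl_desc]
    · rw [← assoc, hp'', biprod.inr_desc]
  refine isomorphic_distinguished _ hW _ ?_
  have := hγiso
  refine Triangle.isoMk _ _ (Iso.refl _) (Iso.refl _) (asIso γ).symm ?_ ?_ ?_
  · dsimp [Triangle.rotate, Triangle.mk]; rw [id_comp, comp_id]
  · dsimp [Triangle.rotate, Triangle.mk]
    rw [id_comp, ← hpγ, assoc, IsIso.hom_inv_id, comp_id]
  · dsimp [Triangle.rotate, Triangle.mk]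
    rw [CategoryTheory.Functor.map_id, comp_id, ← hγh, ← assoc, IsIso.inv_hom_id, id_comp]
end

section
/- Let H be an hereditary abelian category, viewed inside its bounded derived category D^b(H). For a morphism f : X → Y in H with kernel K (via x ∘ k where x : K → X is the kernel map) and cokernel C (via y : Y → C), factored through its image I as f = f₂ ∘ f₁, there is an exact triangle in D^b(H) of the form X --f--> Y --⟨-ε, y⟩--> K[1] ⊕ C --(x[1], η)--> X[1], where ε ∈ Hom(Y, K[1]) and η ∈ Hom(C, X[1]) are the classes of certain extensions fitting in a pull-back/push-out diagram. In particular, the cone of f in D^b(H) is isomorphic to (ker f)[1] ⊕ coker f. -/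
/-!
Factor `f` as `X ↠ I ↪ Y` through its image. The two short exact sequences
`0 → K → X → I → 0` and `0 → I → Y → Q → 0` give distinguished triangles, and the octahedral
axiom applied to `f = (I ↪ Y) ∘ (X ↠ I)` yields a distinguished triangle
`K⟦1⟧ → cone f → Q → K⟦2⟧`. Its connecting morphism lies in `Ext²(Q, K)`, which vanishes
since the category is hereditary, so the triangle splits and `cone f ≅ K⟦1⟧ ⊞ Q`.
-/

open CategoryTheory Category Limits Pretriangulated

noncomputable abbrev DerivedCategory.ι (A : Type*) [Category A] [Abelian A]
    [HasDerivedCategory A] : A ⥤ DerivedCategory A :=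
  DerivedCategory.singleFunctor A 0

namespace CategoryTheory.Limits

variable {A : Type*} [Category A] [Abelian A] {X Y : A} (f : X ⟶ Y)

lemma kernel_ι_comp_factorThruImage : kernel.ι f ≫ factorThruImage f = 0 := by
  simp [← cancel_mono (image.ι f)]

lemma image_ι_comp_cokernel_π : image.ι f ≫ cokernel.π f = 0 := by
  simp [← cancel_epi (factorThruImage f)]

lemma shortExact_kernel_ι_factorThruImage :
    (ShortComplex.mk _ _ (kernel_ι_comp_factorThruImage f)).ShortExact :=
  .mk' (ShortComplex.exact_of_f_is_kernel _
    (isKernelOfComp _ _ (kernelIsKernel f) _ (image.fac f))) inferInstance inferInstance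

lemma shortExact_image_ι_cokernel_π :
    (ShortComplex.mk _ _ (image_ι_comp_cokernel_π f)).ShortExact :=
  .mk' (ShortComplex.exact_of_g_is_cokernel _
    (isCokernelOfComp _ _ (cokernelIsCokernel f) _ (image.fac f))) inferInstance inferInstance

end CategoryTheory.Limits

lemma CategoryTheory.hom_shift_shift_eq_zero {C : Type*} [Category C] [HasZeroMorphisms C]
    [HasShift C ℤ] {a b c : ℤ} (hab : a + b = c) {X Y : C} (h : ∀ g : X ⟶ Y⟦c⟧, g = 0)
    (g : X ⟶ Y⟦a⟧⟦b⟧) : g = 0 :=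
  (cancel_mono ((shiftFunctorAdd' C a b c hab).inv.app Y)).1 (by rw [h (g ≫ _), zero_comp])

namespace CategoryTheory.Pretriangulated

variable {C : Type*} [Category C] [Preadditive C] [HasZeroObject C] [HasShift C ℤ]
  [∀ n : ℤ, (shiftFunctor C n).Additive] [Pretriangulated C]

lemma mk_neg_neg_distinguished {X₁ X₂ X₃ : C} {u : X₁ ⟶ X₂} {v : X₂ ⟶ X₃}
    {w : X₃ ⟶ X₁⟦(1 : ℤ)⟧} (h : Triangle.mk u v w ∈ distTriang C) :
    Triangle.mk u (-v) (-w) ∈ distTriang C :=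
  isomorphic_distinguished _ h _ (Triangle.isoMk _ _ (Iso.refl _) (Iso.refl _)
    { hom := -𝟙 X₃, inv := -𝟙 X₃, hom_inv_id := by simp [Triangle.mk],
      inv_hom_id := by simp [Triangle.mk] }
    (by simp [Triangle.mk]) (by simp [Triangle.mk]) (by simp [Triangle.mk]))

lemma exists_biprod_distinguished_of_comp [IsTriangulated C] {X₁ X₂ X₃ Z₁₂ Z₂₃ : C}
    {u₁₂ : X₁ ⟶ X₂} {v₁₂ : X₂ ⟶ Z₁₂} {w₁₂ : Z₁₂ ⟶ X₁⟦(1 : ℤ)⟧}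
    {u₂₃ : X₂ ⟶ X₃} {v₂₃ : X₃ ⟶ Z₂₃} {w₂₃ : Z₂₃ ⟶ X₂⟦(1 : ℤ)⟧}
    (h₁₂ : Triangle.mk u₁₂ v₁₂ w₁₂ ∈ distTriang C) (h₂₃ : Triangle.mk u₂₃ v₂₃ w₂₃ ∈ distTriang C)
    (hw : w₂₃ ≫ v₁₂⟦(1 : ℤ)⟧' = 0) :
    ∃ (a : X₃ ⟶ Z₁₂) (b : Z₂₃ ⟶ X₁⟦(1 : ℤ)⟧),
      Triangle.mk (u₁₂ ≫ u₂₃) (biprod.lift a v₂₃) (biprod.desc w₁₂ b) ∈ distTriang C := by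
  obtain ⟨Z₁₃, v₁₃, w₁₃, h₁₃⟩ := distinguished_cocone_triangle (u₁₂ ≫ u₂₃)
  let O := Triangulated.someOctahedron rfl h₁₂ h₂₃ h₁₃
  obtain ⟨e, he₁, he₂⟩ : ∃ e : Z₁₃ ≅ Z₁₂ ⊞ Z₂₃,
      O.m₁ ≫ e.hom = biprod.inl ∧ O.m₃ = e.hom ≫ biprod.snd :=
    exists_iso_binaryBiproduct_of_distTriang _ O.mem hw
  set a := v₁₃ ≫ e.hom ≫ biprod.fst
  set b := biprod.inr ≫ e.inv ≫ w₁₃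
  have hmor₂ : biprod.lift a v₂₃ = v₁₃ ≫ e.hom := by
    ext
    · simp [a]
    · simp [← he₂, O.comm₃]
  have hmor₃ : biprod.desc w₁₂ b = e.inv ≫ w₁₃ := by
    have hinl : biprod.inl ≫ e.inv = O.m₁ := by simp [← he₁]
    ext
    · simp [reassoc_of% hinl, O.comm₂]
    · simp [b]
  refine ⟨a, b, isomorphic_distinguished _ h₁₃ _ (Triangle.isoMk _ _ (Iso.refl X₁) (Iso.refl X₃)
    e.symm (by simp [Triangle.mk]) (by simp [Triangle.mk, hmor₂]) (by simp [Triangle.mk, hmor₃]))⟩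

end CategoryTheory.Pretriangulated

theorem cone_in_hereditary_derived_category
    {A : Type*} [Category A] [Abelian A] [HasDerivedCategory A]
    (hHered : ∀ (X Y : A) (n : ℤ), 2 ≤ n →
      ∀ f : (DerivedCategory.ι A).obj X ⟶ ((DerivedCategory.ι A).obj Y)⟦n⟧, f = 0)
    {X Y : A} (f : X ⟶ Y) :
    ∃ (ε : (DerivedCategory.ι A).obj Y ⟶ ((DerivedCategory.ι A).obj (kernel f))⟦(1 : ℤ)⟧)
      (η : (DerivedCategory.ι A).obj (cokernel f) ⟶ ((DerivedCategory.ι A).obj X)⟦(1 : ℤ)⟧),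
      Triangle.mk ((DerivedCategory.ι A).map f)
        (biprod.lift (-ε) ((DerivedCategory.ι A).map (cokernel.π f)))
        (biprod.desc ((shiftFunctor (DerivedCategory A) (1 : ℤ)).map
            ((DerivedCategory.ι A).map (kernel.ι f))) η)
        ∈ distTriang (DerivedCategory A) := by
  let F := DerivedCategory.ι A
  have hK : Triangle.mk (F.map (factorThruImage f)) (shortExact_kernel_ι_factorThruImage f).singleδ
      (-(F.map (kernel.ι f))⟦(1 : ℤ)⟧') ∈ distTriang _ :=
    rot_of_distTriang _ (shortExact_kernel_ι_factorThruImage f).singleTriangle_distinguished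
  have hQ : Triangle.mk (F.map (image.ι f)) (F.map (cokernel.π f))
      (shortExact_image_ι_cokernel_π f).singleδ ∈ distTriang _ :=
    (shortExact_image_ι_cokernel_π f).singleTriangle_distinguished
  obtain ⟨a, η, h⟩ := exists_biprod_distinguished_of_comp (mk_neg_neg_distinguished hK) hQ
    (hom_shift_shift_eq_zero (by norm_num) (hHered _ _ 2 le_rfl) _)
  rw [neg_neg, ← F.map_comp, image.fac] at h
  exact ⟨-a, η, by rwa [neg_neg]⟩
end

section
/- Let T be an essentially small triangulated category in which every object is a finite direct sum of indecomposables. Then T is a block (not triangle equivalent to a nontrivial product of triangulated categories) if and only if T is path-connected, i.e., any two indecomposable objects are connected by a walk, where a path step from X_i to X_{i+1} is either a nonzero morphism X_i → X_{i+1} or the relation X_{i+1} = X_i[1], and a walk is a sequence of forward or backward path steps. -/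
/-!
STATEMENT 10: Let `T` be an essentially small triangulated category in which every object
is a finite direct sum of indecomposables.  Then `T` is a block (admits no non-trivial
product decomposition into triangulated subcategories) if and only if `T` is
path-connected: any two indecomposable objects are connected by a walk.
-/
open CategoryTheory Category Limits Pretriangulated

section PathsAndBlocks

variable {C : Type*} [Category C] [Preadditive C] [HasZeroObject C] [HasShift C ℤ]
  [∀ n : ℤ, (shiftFunctor C n).Additive] [Pretriangulated C]
  [HasBinaryBiproducts C] [HasFiniteBiproducts C]

/-- An object is indecomposable if it is non-zero and has no non-trivial
direct sum decomposition. -/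
def IsIndec (X : C) : Prop :=
  ¬ IsZero X ∧ ∀ Y Z : C, (X ≅ Y ⊞ Z) → IsZero Y ∨ IsZero Z

/-- A single step of a path: both objects are indecomposable and either there is a
non-zero morphism `X ⟶ Y` or `Y = X⟦1⟧`. -/
def PathStep (X Y : C) : Prop :=
  IsIndec X ∧ IsIndec Y ∧ ((∃ f : X ⟶ Y, f ≠ 0) ∨ Nonempty (Y ≅ X⟦(1 : ℤ)⟧))

/-- There is a path `X ⇝ Y`: a finite sequence of path steps. -/
def HasPath : C → C → Prop := Relation.ReflTransGen PathStep

/-- There is a walk from `X` to `Y`: a finite sequence of forward or backward path steps. -/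
def HasWalk : C → C → Prop := Relation.ReflTransGen (fun X Y => PathStep X Y ∨ PathStep Y X)

/-- Every object is a finite direct sum of indecomposable objects. -/
def AllObjectsDecompose : Prop :=
  ∀ X : C, ∃ (n : ℕ) (G : Fin n → C), (∀ i, IsIndec (G i)) ∧ Nonempty (X ≅ ⨁ G)

variable (C) in
/-- A non-trivial decomposition of the triangulated category `C` into a product of two
triangulated subcategories: two iso-closed, shift-closed classes of objects, each
containing a non-zero object, with no non-zero morphisms between them in either
direction, such that every object is a direct sum of an object of each. -/
def IsProductDecomp (P Q : C → Prop) : Prop :=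
  (∀ {X Y : C}, (X ≅ Y) → P X → P Y) ∧ (∀ {X Y : C}, (X ≅ Y) → Q X → Q Y) ∧
  (∃ X, P X ∧ ¬ IsZero X) ∧ (∃ X, Q X ∧ ¬ IsZero X) ∧
  (∀ (X Y : C), P X → Q Y → ∀ f : X ⟶ Y, f = 0) ∧
  (∀ (X Y : C), Q X → P Y → ∀ f : X ⟶ Y, f = 0) ∧
  (∀ (X : C) (n : ℤ), P X → P (X⟦n⟧)) ∧ (∀ (X : C) (n : ℤ), Q X → Q (X⟦n⟧)) ∧
  (∀ X : C, ∃ X' X'' : C, P X' ∧ Q X'' ∧ Nonempty (X ≅ X' ⊞ X''))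

variable (C) in
/-- `C` is a block: it admits no non-trivial product decomposition. -/
def IsBlock : Prop := ¬ ∃ P Q : C → Prop, IsProductDecomp C P Q

end PathsAndBlocks

/-!
If two indecomposables `X` and `Y` are not joined by a walk, split every object, through its
decomposition into indecomposables, into the summands reachable from `X` by a walk and the
remaining ones. A non-zero morphism between indecomposables, or a shift, is a walk step, so the
two classes are shift-closed and orthogonal: a non-trivial product decomposition. Conversely, in a
product decomposition `(P, Q)` every indecomposable lies in exactly one of `P` and `Q`, and no walk
step leaves `P`, so no walk joins an indecomposable of `P` to one of `Q`.
-/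

namespace CategoryTheory.Limits

variable {C : Type*} [Category C] {J : Type*} [Finite J]

lemma biproduct.fromSubtype_toSubtype_of_disjoint [HasZeroMorphisms C] [HasFiniteBiproducts C]
    (f : J → C) {p q : J → Prop} (h : ∀ j, p j → ¬ q j) :
    biproduct.fromSubtype f p ≫ biproduct.toSubtype f q = 0 := by
  classical
  refine biproduct.hom_ext _ _ fun ⟨k, hk⟩ => ?_
  simp only [Category.assoc, biproduct.toSubtype_π, zero_comp]
  exact (biproduct.fromSubtype_π f p k).trans (dif_neg fun hp => h k hp hk)

noncomputable def biproduct.isoBiprodSubtype [Preadditive C] [HasFiniteBiproducts C]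
    [HasBinaryBiproducts C] (f : J → C) (p : J → Prop) :
    ⨁ f ≅ (⨁ Subtype.restrict p f) ⊞ (⨁ Subtype.restrict (fun j => ¬ p j) f) where
  hom := biprod.lift (biproduct.toSubtype f p) (biproduct.toSubtype f _)
  inv := biprod.desc (biproduct.fromSubtype f p) (biproduct.fromSubtype f _)
  hom_inv_id := by
    classical
    ext j
    by_cases hj : p j <;> simp [hj]
  inv_hom_id := by
    apply biprod.hom_ext' <;> apply biprod.hom_ext <;>
      simp [biproduct.fromSubtype_toSubtype_of_disjoint]

end CategoryTheory.Limits

section Shift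

variable {C : Type*} [Category C] [Preadditive C] [HasShift C ℤ]
  [∀ n : ℤ, (shiftFunctor C n).Additive]

lemma CategoryTheory.Limits.IsZero.of_shift {X : C} {n : ℤ} (h : IsZero (X⟦n⟧)) : IsZero X :=
  ((shiftFunctor C (-n)).map_isZero h).of_iso (shiftShiftNeg X n).symm

end Shift

section PathsAndWalks

variable {C : Type*} [Category C] [Preadditive C] [HasBinaryBiproducts C]

lemma IsIndec.of_iso {X Y : C} (hX : IsIndec X) (e : X ≅ Y) : IsIndec Y :=
  ⟨fun hY => hX.1 (hY.of_iso e), fun A B e' => hX.2 A B (e ≪≫ e')⟩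

variable [HasShift C ℤ]

lemma pathStep_of_iso {X Y : C} (hX : IsIndec X) (e : X ≅ Y) : PathStep X Y :=
  ⟨hX, hX.of_iso e, .inl ⟨e.hom, fun h => hX.1 <| by
    rw [IsZero.iff_id_eq_zero, ← e.hom_inv_id, h, zero_comp]⟩⟩

lemma HasWalk.symm {X Y : C} (h : HasWalk X Y) : HasWalk Y X :=
  Relation.reflTransGen_swap.mp (Relation.ReflTransGen.mono (fun _ _ => Or.symm) _ _ h)

variable [∀ n : ℤ, (shiftFunctor C n).Additive]

lemma IsIndec.shift {X : C} (hX : IsIndec X) (n : ℤ) : IsIndec (X⟦n⟧) := by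
  refine ⟨fun h => hX.1 h.of_shift, fun Y Z e => ?_⟩
  have := preservesBinaryBiproducts_of_preservesBiproducts (shiftFunctor C (-n))
  have e' : X ≅ Y⟦-n⟧ ⊞ Z⟦-n⟧ :=
    (shiftShiftNeg X n).symm ≪≫ (shiftFunctor C (-n)).mapIso e ≪≫
      (shiftFunctor C (-n)).mapBiprod Y Z
  exact (hX.2 _ _ e').imp IsZero.of_shift IsZero.of_shift

lemma hasWalk_shift {X : C} (hX : IsIndec X) (n : ℤ) : HasWalk X (X⟦n⟧) := by
  induction n using Int.induction_on with
  | zero => exact .single (.inl (pathStep_of_iso hX ((shiftFunctorZero C ℤ).symm.app X)))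
  | succ i ih =>
    exact ih.tail (.inl ⟨hX.shift _, hX.shift _, .inr ⟨(shiftFunctorAdd C (i : ℤ) 1).app X⟩⟩)
  | pred i ih =>
    exact ih.tail (.inr ⟨hX.shift _, hX.shift _,
      .inr ⟨(shiftFunctorAdd' C (-(i : ℤ) - 1) 1 (-(i : ℤ)) (by ring)).app X⟩⟩)

end PathsAndWalks

section SumsOfIndecomposables

variable {C : Type*} [Category C] [Preadditive C] [HasBinaryBiproducts C] [HasFiniteBiproducts C]

def IsSumOfIndecs (S : C → Prop) (Z : C) : Prop :=
  ∃ (ι : Type) (_ : Finite ι) (G : ι → C), (∀ i, IsIndec (G i) ∧ S (G i)) ∧ Nonempty (Z ≅ ⨁ G)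

namespace IsSumOfIndecs

variable {S T : C → Prop}

lemma of_iso {Z W : C} (h : IsSumOfIndecs S Z) (e : Z ≅ W) : IsSumOfIndecs S W := by
  obtain ⟨ι, _, G, hG, ⟨e'⟩⟩ := h
  exact ⟨ι, inferInstance, G, hG, ⟨e.symm ≪≫ e'⟩⟩

lemma of_isIndec {X : C} (hX : IsIndec X) (hS : S X) : IsSumOfIndecs S X :=
  ⟨PUnit, inferInstance, fun _ => X, fun _ => ⟨hX, hS⟩,
    ⟨(biproductUniqueIso fun _ : PUnit => X).symm⟩⟩

lemma hom_eq_zero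
    (hST : ∀ A B : C, IsIndec A → IsIndec B → S A → T B → ∀ f : A ⟶ B, f = 0)
    {Z W : C} (hZ : IsSumOfIndecs S Z) (hW : IsSumOfIndecs T W) (f : Z ⟶ W) : f = 0 := by
  obtain ⟨ι, _, G, hG, ⟨e⟩⟩ := hZ
  obtain ⟨κ, _, H, hH, ⟨e'⟩⟩ := hW
  have h : e.inv ≫ f ≫ e'.hom = 0 :=
    biproduct.hom_ext' _ _ fun i => biproduct.hom_ext _ _ fun k => by
      simpa using hST _ _ (hG i).1 (hH k).1 (hG i).2 (hH k).2
        (biproduct.ι G i ≫ e.inv ≫ f ≫ e'.hom ≫ biproduct.π H k)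
  simpa using congrArg (e.hom ≫ · ≫ e'.inv) h

lemma shift [HasShift C ℤ] [∀ n : ℤ, (shiftFunctor C n).Additive] {n : ℤ}
    (hS : ∀ A : C, IsIndec A → S A → S (A⟦n⟧)) {Z : C} (h : IsSumOfIndecs S Z) :
    IsSumOfIndecs S (Z⟦n⟧) := by
  obtain ⟨ι, _, G, hG, ⟨e⟩⟩ := h
  exact ⟨ι, inferInstance, fun i => (G i)⟦n⟧,
    fun i => ⟨(hG i).1.shift n, hS _ (hG i).1 (hG i).2⟩,
    ⟨(shiftFunctor C n).mapIso e ≪≫ (shiftFunctor C n).mapBiproduct G⟩⟩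

end IsSumOfIndecs

lemma exists_iso_biprod_isSumOfIndecs (hdec : AllObjectsDecompose (C := C)) (S : C → Prop)
    (Z : C) : ∃ Z' Z'' : C, IsSumOfIndecs S Z' ∧ IsSumOfIndecs (fun A => ¬ S A) Z'' ∧
      Nonempty (Z ≅ Z' ⊞ Z'') := by
  obtain ⟨n, G, hG, ⟨e⟩⟩ := hdec Z
  exact ⟨_, _, ⟨{i // S (G i)}, inferInstance, _, fun i => ⟨hG i, i.2⟩, ⟨Iso.refl _⟩⟩,
    ⟨{i // ¬ S (G i)}, inferInstance, _, fun i => ⟨hG i, i.2⟩, ⟨Iso.refl _⟩⟩,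
    ⟨e ≪≫ biproduct.isoBiprodSubtype G fun i => S (G i)⟩⟩

lemma exists_isIndec_hom_ne_zero (hdec : AllObjectsDecompose (C := C)) {X : C}
    (hX : ¬ IsZero X) : ∃ G : C, IsIndec G ∧ ∃ f : G ⟶ X, f ≠ 0 := by
  obtain ⟨n, G, hG, ⟨e⟩⟩ := hdec X
  by_contra! h
  refine hX (IsZero.of_iso ((IsZero.iff_id_eq_zero _).2 ?_) e)
  refine biproduct.hom_ext' _ _ fun i => ?_
  simpa using congrArg (· ≫ e.hom) (h (G i) (hG i) (biproduct.ι G i ≫ e.inv))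

end SumsOfIndecomposables

section Decompositions

variable {C : Type*} [Category C] [Preadditive C] [HasShift C ℤ] [HasBinaryBiproducts C]

namespace IsProductDecomp

variable {P Q : C → Prop}

lemma symm (h : IsProductDecomp C P Q) : IsProductDecomp C Q P := by
  obtain ⟨hP, hQ, hP₀, hQ₀, hPQ, hQP, hPs, hQs, hsum⟩ := h
  refine ⟨hQ, hP, hQ₀, hP₀, hQP, hPQ, hQs, hPs, fun X => ?_⟩
  obtain ⟨X', X'', hX', hX'', ⟨e⟩⟩ := hsum X
  exact ⟨X'', X', hX'', hX', ⟨e ≪≫ biprod.braiding X' X''⟩⟩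

lemma isZero_of_left_of_right (h : IsProductDecomp C P Q) {X : C} (hP : P X) (hQ : Q X) :
    IsZero X := by
  have ⟨_, _, _, _, hPQ, _⟩ := h
  exact (IsZero.iff_id_eq_zero X).2 (hPQ X X hP hQ (𝟙 X))

lemma left_or_right (h : IsProductDecomp C P Q) {X : C} (hX : IsIndec X) : P X ∨ Q X := by
  obtain ⟨hP, hQ, -, -, -, -, -, -, hsum⟩ := h
  obtain ⟨X', X'', hX', hX'', ⟨e⟩⟩ := hsum X
  exact (hX.2 _ _ e).symm.imp (fun hz => hP (e ≪≫ (isoBiprodZero hz).symm).symm hX')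
    (fun hz => hQ (e ≪≫ (isoZeroBiprod hz).symm).symm hX'')

lemma not_pathStep (h : IsProductDecomp C P Q) {X Y : C} (hX : P X) (hY : Q Y) :
    ¬ PathStep X Y := by
  have ⟨hP, _, _, _, hPQ, _, hPs, _⟩ := h
  rintro ⟨-, hYi, ⟨f, hf⟩ | ⟨⟨e⟩⟩⟩
  · exact hf (hPQ X Y hX hY f)
  · exact hYi.1 (h.isZero_of_left_of_right (hP e.symm (hPs X 1 hX)) hY)

lemma left_of_hasWalk (h : IsProductDecomp C P Q) {X Y : C} (hXY : HasWalk X Y) (hX : P X) :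
    P Y := by
  induction hXY with
  | refl => exact hX
  | @tail A B _ hAB hA =>
    have hB : IsIndec B := hAB.elim (·.2.1) (·.1)
    refine (h.left_or_right hB).resolve_right fun hQB => ?_
    rcases hAB with hAB | hBA
    · exact h.not_pathStep hA hQB hAB
    · exact h.symm.not_pathStep hQB hA hBA

lemma exists_isIndec_left [HasFiniteBiproducts C] (hdec : AllObjectsDecompose (C := C))
    (h : IsProductDecomp C P Q) : ∃ X : C, IsIndec X ∧ P X := by
  have ⟨_, _, ⟨X, hPX, hX⟩, _, _, hQP, _⟩ := h
  obtain ⟨G, hG, f, hf⟩ := exists_isIndec_hom_ne_zero hdec hX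
  exact ⟨G, hG, (h.left_or_right hG).resolve_right fun hQG => hf (hQP G X hQG hPX f)⟩

end IsProductDecomp

variable [∀ n : ℤ, (shiftFunctor C n).Additive] [HasFiniteBiproducts C]

lemma isProductDecomp_of_not_hasWalk (hdec : AllObjectsDecompose (C := C)) {X Y : C}
    (hX : IsIndec X) (hY : IsIndec Y) (hXY : ¬ HasWalk X Y) :
    IsProductDecomp C (IsSumOfIndecs (HasWalk X)) (IsSumOfIndecs fun A => ¬ HasWalk X A) := by
  have hom_out : ∀ A B : C, IsIndec A → IsIndec B → HasWalk X A → ¬ HasWalk X B →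
      ∀ f : A ⟶ B, f = 0 := fun A B hA hB hXA hXB f =>
    by_contra fun hf => hXB (hXA.tail (.inl ⟨hA, hB, .inl ⟨f, hf⟩⟩))
  have hom_in : ∀ A B : C, IsIndec A → IsIndec B → ¬ HasWalk X A → HasWalk X B →
      ∀ f : A ⟶ B, f = 0 := fun A B hA hB hXA hXB f =>
    by_contra fun hf => hXA (hXB.tail (.inr ⟨hA, hB, .inl ⟨f, hf⟩⟩))
  exact ⟨fun e h => h.of_iso e, fun e h => h.of_iso e,
    ⟨X, .of_isIndec hX .refl, hX.1⟩, ⟨Y, .of_isIndec hY hXY, hY.1⟩,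
    fun _ _ hA hB => IsSumOfIndecs.hom_eq_zero hom_out hA hB,
    fun _ _ hA hB => IsSumOfIndecs.hom_eq_zero hom_in hA hB,
    fun _ n h => h.shift fun A hA hXA => hXA.trans (hasWalk_shift hA n),
    fun _ n h => h.shift fun A hA hXA hXAn => hXA (hXAn.trans (hasWalk_shift hA n).symm),
    exists_iso_biprod_isSumOfIndecs hdec _⟩

end Decompositions

theorem block_iff_path_connected
    {C : Type*} [Category C] [Preadditive C] [HasZeroObject C] [HasShift C ℤ]
    [∀ n : ℤ, (shiftFunctor C n).Additive] [Pretriangulated C]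
    [HasBinaryBiproducts C] [HasFiniteBiproducts C] [EssentiallySmall C]
    (hdec : AllObjectsDecompose (C := C)) :
    IsBlock C ↔ ∀ X Y : C, IsIndec X → IsIndec Y → HasWalk X Y := by
  constructor
  · intro hblock X Y hX hY
    by_contra hXY
    exact hblock ⟨_, _, isProductDecomp_of_not_hasWalk hdec hX hY hXY⟩
  · rintro hconn ⟨P, Q, h⟩
    obtain ⟨X, hX, hPX⟩ := h.exists_isIndec_left hdec
    obtain ⟨Y, hY, hQY⟩ := h.symm.exists_isIndec_left hdec
    exact hY.1 (h.isZero_of_left_of_right (h.left_of_hasWalk (hconn X Y hX hY) hPX) hQY)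
end

section
/- In a pre-triangulated category satisfying the octahedral axiom in the form (TR4''), the strong form of the octahedral axiom (TR4) holds: any octahedral diagram built from composable morphisms f : X → Y and u : Y → Y' can be completed so that the triangle Y --⟨-g, u⟩--> Z ⊕ Y' --(u', g')--> Z' --δ--> Y[1] is exact, where δ = f[1] ∘ h' = w ∘ v'. -/
/-!
Apply (TR4'') twice. Along `u`, from the triangles on `f` and `f ≫ u`, it gives `u'` and the
exact triangle `Y → Z ⊞ Y' → Z' → Y⟦1⟧`. Along `biprod.snd`, from that triangle and the one on
`u`, it gives `v'` and an exact triangle `Z ⊞ Y' → Z' ⊞ Y' → W → (Z ⊞ Y')⟦1⟧`, of which the third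
column `Z → Z' → W → Z⟦1⟧` is a retract. A retract of a distinguished triangle is distinguished:
compare it with the cone of its first morphism; the retraction makes the comparison map a split
mono, and the exactness that the retract inherits makes it epi.
-/

open CategoryTheory Category Limits Pretriangulated

namespace CategoryTheory.Pretriangulated

variable {C : Type*} [Category C] [Preadditive C] [HasZeroObject C] [HasShift C ℤ]
  [∀ n : ℤ, (shiftFunctor C n).Additive] [Pretriangulated C]

section Retract

variable {T T' : Triangle C} (h : Retract T T') (hT' : T' ∈ distTriang C)
include h hT'

lemma comp_distTriang_mor_zero₃₁_of_retract : T.mor₃ ≫ T.mor₁⟦1⟧' = 0 := by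
  have hr₃ : h.i.hom₃ ≫ h.r.hom₃ = 𝟙 _ := (h.map Triangle.π₃).retract
  calc T.mor₃ ≫ T.mor₁⟦1⟧' = h.i.hom₃ ≫ (T'.mor₃ ≫ T'.mor₁⟦1⟧') ≫ h.r.hom₂⟦1⟧' := by
        rw [assoc, ← Functor.map_comp, h.r.comm₁, Functor.map_comp, h.r.comm₃_assoc,
          reassoc_of% hr₃]
    _ = 0 := by rw [comp_distTriang_mor_zero₃₁ _ hT', zero_comp, comp_zero]

lemma yoneda_exact₃_of_retract {X : C} (f : T.obj₃ ⟶ X) (hf : T.mor₂ ≫ f = 0) :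
    ∃ g, f = T.mor₃ ≫ g := by
  have hr₃ : h.i.hom₃ ≫ h.r.hom₃ = 𝟙 _ := (h.map Triangle.π₃).retract
  obtain ⟨g, hg⟩ := T'.yoneda_exact₃ hT' (h.r.hom₃ ≫ f) (by rw [h.r.comm₂_assoc, hf, comp_zero])
  exact ⟨h.i.hom₁⟦1⟧' ≫ g, by rw [h.i.comm₃_assoc, ← hg, reassoc_of% hr₃]⟩

lemma isIso₃_of_isIso₁₂_of_retract {D : Triangle C} (ψ : D ⟶ T) (hD : D ∈ distTriang C)
    (h₁ : IsIso ψ.hom₁) (h₂ : IsIso ψ.hom₂) : IsIso ψ.hom₃ := by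
  have hψ₁ : inv ψ.hom₁ ≫ D.mor₁ = T.mor₁ ≫ inv ψ.hom₂ := by
    rw [IsIso.inv_comp_eq, ← assoc, ← ψ.comm₁, assoc, IsIso.hom_inv_id, comp_id]
  have : Mono ψ.hom₃ := by
    have hr₁ : h.i.hom₁ ≫ h.r.hom₁ = 𝟙 _ := (h.map Triangle.π₁).retract
    have hr₂ : h.i.hom₂ ≫ h.r.hom₂ = 𝟙 _ := (h.map Triangle.π₂).retract
    let χ := completeDistinguishedTriangleMorphism T' D hT' hD
      (h.r.hom₁ ≫ inv ψ.hom₁) (h.r.hom₂ ≫ inv ψ.hom₂) (by simp [hψ₁])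
    have : IsIso (ψ.hom₃ ≫ h.i.hom₃ ≫ χ.hom₃) := isIso₃_of_isIso₁₂ (ψ ≫ h.i ≫ χ) hD hD
      (by
        simp only [triangleCategory_comp, TriangleMorphism.comp_hom₁,
          completeDistinguishedTriangleMorphism_hom₁, reassoc_of% hr₁, IsIso.hom_inv_id, χ]
        infer_instance)
      (by
        simp only [triangleCategory_comp, TriangleMorphism.comp_hom₂,
          completeDistinguishedTriangleMorphism_hom₂, reassoc_of% hr₂, IsIso.hom_inv_id, χ]
        infer_instance)
    exact mono_of_mono _ (h.i.hom₃ ≫ χ.hom₃)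
  have : Epi ψ.hom₃ := by
    rw [Preadditive.epi_iff_cancel_zero]
    intro X x hx
    obtain ⟨z, rfl⟩ := yoneda_exact₃_of_retract h hT' x (by
      rw [← cancel_epi ψ.hom₂, ← ψ.comm₂_assoc, hx, comp_zero, comp_zero])
    obtain ⟨a, ha⟩ : ∃ a : D.obj₂⟦(1 : ℤ)⟧ ⟶ X, ψ.hom₁⟦1⟧' ≫ z = (-D.mor₁⟦1⟧') ≫ a :=
      Triangle.yoneda_exact₃ _ (rot_of_distTriang _ hD) _
        (show D.mor₃ ≫ ψ.hom₁⟦1⟧' ≫ z = 0 by rw [ψ.comm₃_assoc, hx])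
    calc T.mor₃ ≫ z = T.mor₃ ≫ (inv ψ.hom₁)⟦1⟧' ≫ ψ.hom₁⟦1⟧' ≫ z := by
          rw [← Functor.map_comp_assoc, IsIso.inv_hom_id, Functor.map_id, id_comp]
      _ = -(T.mor₃ ≫ T.mor₁⟦1⟧' ≫ (inv ψ.hom₂)⟦1⟧' ≫ a) := by
          rw [ha, Preadditive.neg_comp, Preadditive.comp_neg, Preadditive.comp_neg,
            ← Functor.map_comp_assoc, hψ₁, Functor.map_comp, assoc]
      _ = 0 := by
          rw [reassoc_of% comp_distTriang_mor_zero₃₁_of_retract h hT', zero_comp, neg_zero]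
  have := isSplitMono_of_mono ψ.hom₃
  exact isIso_of_epi_of_isSplitMono _

lemma distinguished_of_retract : T ∈ distTriang C := by
  obtain ⟨Q, g, δ, hD⟩ := distinguished_cocone_triangle T.mor₁
  let ψ := completeDistinguishedTriangleMorphism _ T' hD hT' h.i.hom₁ h.i.hom₂ h.i.comm₁ ≫ h.r
  have hr₁ : h.i.hom₁ ≫ h.r.hom₁ = 𝟙 _ := (h.map Triangle.π₁).retract
  have hr₂ : h.i.hom₂ ≫ h.r.hom₂ = 𝟙 _ := (h.map Triangle.π₂).retract
  have h₁ : IsIso ψ.hom₁ := by change IsIso (h.i.hom₁ ≫ h.r.hom₁); rw [hr₁]; infer_instance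
  have h₂ : IsIso ψ.hom₂ := by change IsIso (h.i.hom₂ ≫ h.r.hom₂); rw [hr₂]; infer_instance
  have := isIso₃_of_isIso₁₂_of_retract h hT' ψ hD h₁ h₂
  have := Triangle.isIso_of_isIsos ψ h₁ h₂ this
  exact isomorphic_distinguished _ hD _ (asIso ψ).symm

end Retract

variable [HasBinaryBiproducts C]

noncomputable def octahedronColumnRetract {Y Y' Z Z' W : C} (g : Y ⟶ Z) (u : Y ⟶ Y')
    (u' : Z ⟶ Z') (g' : Y' ⟶ Z') (v' : Z' ⟶ W) (w : W ⟶ Y⟦(1 : ℤ)⟧) (hw : w ≫ u⟦1⟧' = 0) :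
    Retract (Triangle.mk u' v' (w ≫ g⟦1⟧'))
      (Triangle.mk (biprod.lift (-biprod.desc u' g') biprod.snd) (biprod.desc v' (g' ≫ v'))
        (w ≫ (biprod.lift (-g) u)⟦1⟧')) where
  -- the projections of `Triangle.mk` are not reducible: unfold it so that `ext` and `simp` apply
  i := Triangle.homMk _ _ (-biprod.inl) biprod.inl (𝟙 W) (by unfold Triangle.mk; ext <;> simp)
    (by unfold Triangle.mk; simp) (by unfold Triangle.mk; simp [biprod.lift_eq, reassoc_of% hw])
  r := Triangle.homMk _ _ (-biprod.fst) (biprod.desc (𝟙 Z') g') (𝟙 W)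
    (by unfold Triangle.mk; ext <;> simp) (by unfold Triangle.mk; ext <;> simp)
    (by unfold Triangle.mk; simp [← Functor.map_comp])
  retract := by ext <;> unfold Triangle.mk <;> simp

end CategoryTheory.Pretriangulated

theorem TR4''_implies_strong_TR4
    {C : Type*} [Category C] [Preadditive C] [HasZeroObject C] [HasShift C ℤ]
    [∀ n : ℤ, (shiftFunctor C n).Additive] [Pretriangulated C] [HasBinaryBiproducts C]
    -- the axiom (TR4'')
    (hTR4'' : ∀ {X Y Z Y' Z' : C} (f : X ⟶ Y) (g : Y ⟶ Z) (h : Z ⟶ X⟦(1 : ℤ)⟧)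
      (f' : X ⟶ Y') (g' : Y' ⟶ Z') (h' : Z' ⟶ X⟦(1 : ℤ)⟧) (u : Y ⟶ Y'),
      (Triangle.mk f g h ∈ distTriang C) → (Triangle.mk f' g' h' ∈ distTriang C) →
      f ≫ u = f' →
      ∃ u' : Z ⟶ Z', g ≫ u' = u ≫ g' ∧ u' ≫ h' = h ∧
        Triangle.mk (biprod.lift (-g) u) (biprod.desc u' g')
          (h' ≫ (shiftFunctor C (1 : ℤ)).map f) ∈ distTriang C) :
    -- the strong form of (TR4)
    ∀ {X Y Y' Z Z' W : C} (f : X ⟶ Y) (u : Y ⟶ Y')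
      (g : Y ⟶ Z) (h : Z ⟶ X⟦(1 : ℤ)⟧) (g' : Y' ⟶ Z') (h' : Z' ⟶ X⟦(1 : ℤ)⟧)
      (v : Y' ⟶ W) (w : W ⟶ Y⟦(1 : ℤ)⟧),
      (Triangle.mk f g h ∈ distTriang C) →
      (Triangle.mk (f ≫ u) g' h' ∈ distTriang C) →
      (Triangle.mk u v w ∈ distTriang C) →
      ∃ (u' : Z ⟶ Z') (v' : Z' ⟶ W),
        g ≫ u' = u ≫ g' ∧ u' ≫ h' = h ∧ g' ≫ v' = v ∧
        v' ≫ w = h' ≫ (shiftFunctor C (1 : ℤ)).map f ∧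
        (Triangle.mk u' v' (w ≫ (shiftFunctor C (1 : ℤ)).map g) ∈ distTriang C) ∧
        (Triangle.mk (biprod.lift (-g) u) (biprod.desc u' g')
          (h' ≫ (shiftFunctor C (1 : ℤ)).map f) ∈ distTriang C) := by
  intro X Y Y' Z Z' W f u g h g' h' v w hfgh hfug huvw
  obtain ⟨u', hgu', hu'h', hsum⟩ := hTR4'' f g h (f ≫ u) g' h' u hfgh hfug rfl
  obtain ⟨v', hv', hv'w, hbig⟩ := hTR4'' _ _ _ u v w biprod.snd hsum huvw (by simp)
  have hg'v' : g' ≫ v' = v := by simpa using biprod.inr ≫= hv'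
  subst hg'v'
  refine ⟨u', v', hgu', hu'h', rfl, hv'w, ?_, hsum⟩
  exact distinguished_of_retract
    (octahedronColumnRetract g u u' g' v' w (comp_distTriang_mor_zero₃₁ _ huvw)) hbig
end
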